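/- arXiv:1710.07858 — 4 statements merged into one kernel-verified Lean document; each statement's English description precedes it below -/
import Mathlib

section
/- Let v be a strongly evanescent solution of the second-order gradient system (DS-2). Then the limit lim_{t→∞} ψ(v(t)) exists in ℝ, and for every t ≥ 0 one has |ψ(v(0)) − ψ(v(t))| ≤ ∫₀^t ‖v′(s)‖² ds. -/
open Filter MeasureTheory Set
open scoped RealInnerProductSpace Topology

/-!
Along a solution of `v'' = ∇V(v)` the energy `‖v'‖² - 2 V(v)` is conserved. Since
`|‖v'‖² - 2V(v)| ≤ 2 (‖v'‖² + V(v))` and the right-hand side is integrable on `(0, ∞)`, this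
constant must vanish, so `‖∇ψ(v)‖ = ‖v'‖`. By Cauchy–Schwarz the derivative
`⟪∇ψ(v), v'⟫` of `ψ ∘ v` is then bounded by `‖v'‖²`, which is integrable: this gives both the
limit at infinity and the estimate.
-/

section RealLine

variable {E : Type*} [NormedAddCommGroup E] {h : ℝ → ℝ} {a : ℝ}

theorem eq_zero_of_norm_le_of_integrableOn_Ioi {c : E} (hh : IntegrableOn h (Ioi a))
    (hc : ∀ t ∈ Ioi a, ‖c‖ ≤ h t) : c = 0 := by
  have hconst : IntegrableOn (fun _ => ‖c‖) (Ioi a) := by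
    refine hh.mono' aestronglyMeasurable_const ?_
    filter_upwards [ae_restrict_mem measurableSet_Ioi] with t ht
    simpa using hc t ht
  rcases (integrableOn_const_iff).1 hconst with hzero | hfinite
  · simpa using hzero
  · simp [Real.volume_Ioi] at hfinite

variable [NormedSpace ℝ E] [CompleteSpace E] {φ g : ℝ → E}

theorem exists_tendsto_atTop_of_hasDerivWithinAt_Ici
    (hφ : ∀ t ∈ Ici a, HasDerivWithinAt φ (g t) (Ici a) t) (hg : ContinuousOn g (Ici a))
    (hgh : ∀ t ∈ Ici a, ‖g t‖ ≤ h t) (hh : IntegrableOn h (Ioi a)) :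
    ∃ L, Tendsto φ atTop (𝓝 L) := by
  have hgint : IntegrableOn g (Ioi a) := by
    refine hh.mono' ((hg.mono Ioi_subset_Ici_self).aestronglyMeasurable measurableSet_Ioi) ?_
    filter_upwards [ae_restrict_mem measurableSet_Ioi] with t ht
    exact hgh t (Ioi_subset_Ici_self ht)
  exact ⟨_, tendsto_limUnder_of_hasDerivAt_of_integrableOn_Ioi
    (fun t ht => (hφ t (Ioi_subset_Ici_self ht)).hasDerivAt (Ici_mem_nhds ht)) hgint⟩

theorem norm_sub_le_intervalIntegral_of_hasDerivWithinAt_Ici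
    (hφ : ∀ t ∈ Ici a, HasDerivWithinAt φ (g t) (Ici a) t) (hg : ContinuousOn g (Ici a))
    (hgh : ∀ t ∈ Ici a, ‖g t‖ ≤ h t) {b : ℝ} (hab : a ≤ b) (hh : IntervalIntegrable h volume a b) :
    ‖φ b - φ a‖ ≤ ∫ t in a..b, h t := by
  rw [← intervalIntegral.integral_eq_sub_of_hasDeriv_right_of_le hab
    (fun t ht => (hφ t ht.1).continuousWithinAt.mono Icc_subset_Ici_self)
    (fun t ht => (hφ t ht.1.le).mono fun s hs => (ht.1.trans hs).le)
    ((hg.mono Icc_subset_Ici_self).intervalIntegrable_of_Icc hab)]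
  exact intervalIntegral.norm_integral_le_of_norm_le hab
    (ae_of_all _ fun t ht => hgh t ht.1.le) hh

end RealLine

section GradientSystem

variable {H : Type*} [NormedAddCommGroup H] [InnerProductSpace ℝ H] [CompleteSpace H]

theorem ContDiff.gradient {f : H → ℝ} {n : WithTop ℕ∞} (hf : ContDiff ℝ (n + 1) f) :
    ContDiff ℝ n (gradient f) :=
  (InnerProductSpace.toDual ℝ H).symm.contDiff.comp (hf.fderiv_right le_rfl)

theorem DifferentiableAt.comp_hasDerivWithinAt_inner_gradient {f : H → ℝ} {γ : ℝ → H} {γ' : H}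
    {s : Set ℝ} {t : ℝ} (hf : DifferentiableAt ℝ f (γ t)) (hγ : HasDerivWithinAt γ γ' s t) :
    HasDerivWithinAt (fun u => f (γ u)) ⟪gradient f (γ t), γ'⟫ s t := by
  rw [inner_gradient_left]
  exact hf.hasFDerivAt.comp_hasDerivWithinAt t hγ

variable {V : H → ℝ} {v v' : ℝ → H} {a : ℝ}

theorem energy_eq_of_hasDerivWithinAt_gradient (hV : Differentiable ℝ V)
    (hv : ∀ t ∈ Ici a, HasDerivWithinAt v (v' t) (Ici a) t)
    (hv' : ∀ t ∈ Ici a, HasDerivWithinAt v' (gradient V (v t)) (Ici a) t) {t : ℝ} (ht : a ≤ t) :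
    ‖v' t‖ ^ 2 - 2 * V (v t) = ‖v' a‖ ^ 2 - 2 * V (v a) := by
  have hderiv : ∀ s ∈ Ici a,
      HasDerivWithinAt (fun u => ‖v' u‖ ^ 2 - 2 * V (v u)) 0 (Ici a) s := by
    intro s hs
    have h := (hv' s hs).norm_sq.sub
      (((hV _).comp_hasDerivWithinAt_inner_gradient (hv s hs)).const_mul 2)
    rwa [real_inner_comm, sub_self] at h
  refine constant_of_has_deriv_right_zero
    (fun s hs => (hderiv s hs.1).continuousWithinAt.mono Icc_subset_Ici_self)
    (fun s hs => (hderiv s hs.1).mono (Ici_subset_Ici.2 hs.1)) t ⟨ht, le_rfl⟩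

theorem norm_sq_eq_of_integrableOn_Ioi (hV : Differentiable ℝ V) (hV₀ : ∀ x, 0 ≤ V x)
    (hv : ∀ t ∈ Ici a, HasDerivWithinAt v (v' t) (Ici a) t)
    (hv' : ∀ t ∈ Ici a, HasDerivWithinAt v' (gradient V (v t)) (Ici a) t)
    (hev : IntegrableOn (fun t => ‖v' t‖ ^ 2 + V (v t)) (Ioi a)) {t : ℝ} (ht : a ≤ t) :
    ‖v' t‖ ^ 2 = 2 * V (v t) := by
  have henergy : ∀ s, a ≤ s → ‖v' s‖ ^ 2 - 2 * V (v s) = ‖v' a‖ ^ 2 - 2 * V (v a) :=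
    fun s hs => energy_eq_of_hasDerivWithinAt_gradient hV hv hv' hs
  have hzero : ‖v' a‖ ^ 2 - 2 * V (v a) = 0 := by
    refine eq_zero_of_norm_le_of_integrableOn_Ioi (hev.const_mul 2) fun s hs => ?_
    rw [← henergy s (le_of_lt hs), Real.norm_eq_abs, abs_le]
    constructor <;> nlinarith [hV₀ (v s), sq_nonneg ‖v' s‖]
  linarith [henergy t ht]

end GradientSystem

/-- Proposition 1 (i): if `v` is a strongly evanescent solution of the second-order
gradient system `v'' = ∇V(v)` with `V = ½‖∇ψ‖²`, then `lim_{t→∞} ψ(v t)` exists in `ℝ`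
and `|ψ(v 0) - ψ(v t)| ≤ ∫₀ᵗ ‖v'(s)‖² ds` for every `t ≥ 0`. -/
theorem stmt_3 {H : Type*} [NormedAddCommGroup H] [InnerProductSpace ℝ H] [CompleteSpace H]
    (ψ : H → ℝ) (hψ : ContDiff ℝ 2 ψ)
    (V : H → ℝ) (hV : V = fun x => (1/2 : ℝ) * ‖gradient ψ x‖ ^ 2)
    (v v' : ℝ → H)
    (hv : ∀ t ∈ Ici (0:ℝ), HasDerivWithinAt v (v' t) (Ici 0) t)
    (hv' : ∀ t ∈ Ici (0:ℝ), HasDerivWithinAt v' (gradient V (v t)) (Ici 0) t)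
    (hev : IntegrableOn (fun t => ‖v' t‖ ^ 2 + V (v t)) (Ioi 0)) :
    (∃ L : ℝ, Tendsto (fun t => ψ (v t)) atTop (nhds L)) ∧
      ∀ t ≥ (0:ℝ), |ψ (v 0) - ψ (v t)| ≤ ∫ s in (0:ℝ)..t, ‖v' s‖ ^ 2 := by
  have hG : ContDiff ℝ 1 (gradient ψ) := hψ.gradient
  have hVd : Differentiable ℝ V := by
    subst hV
    exact ((hG.differentiable one_ne_zero).norm_sq ℝ).const_mul _
  have hV₀ : ∀ x, 0 ≤ V x := by subst hV; intro x; positivity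
  have hv'c : ContinuousOn v' (Ici 0) := fun t ht => (hv' t ht).continuousWithinAt
  have hψv : ∀ t ∈ Ici (0:ℝ),
      HasDerivWithinAt (fun s => ψ (v s)) ⟪gradient ψ (v t), v' t⟫ (Ici 0) t := fun t ht =>
    (hψ.differentiable two_ne_zero _).comp_hasDerivWithinAt_inner_gradient (hv t ht)
  have hcont : ContinuousOn (fun t => ⟪gradient ψ (v t), v' t⟫) (Ici 0) :=
    (hG.continuous.comp_continuousOn fun t ht => (hv t ht).continuousWithinAt).inner hv'c
  have hbound : ∀ t ∈ Ici (0:ℝ), ‖⟪gradient ψ (v t), v' t⟫‖ ≤ ‖v' t‖ ^ 2 := by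
    intro t ht
    have hsq := norm_sq_eq_of_integrableOn_Ioi hVd hV₀ hv hv' hev ht
    have hnorm : ‖gradient ψ (v t)‖ = ‖v' t‖ :=
      (sq_eq_sq₀ (norm_nonneg _) (norm_nonneg _)).1 (by subst hV; linarith)
    calc ‖⟪gradient ψ (v t), v' t⟫‖ ≤ ‖gradient ψ (v t)‖ * ‖v' t‖ := norm_inner_le_norm _ _
      _ = ‖v' t‖ ^ 2 := by rw [hnorm, sq]
  refine ⟨exists_tendsto_atTop_of_hasDerivWithinAt_Ici hψv hcont
    (fun t ht => (hbound t ht).trans (le_add_of_nonneg_right (hV₀ _))) hev, fun t ht => ?_⟩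
  rw [abs_sub_comm, ← Real.norm_eq_abs]
  exact norm_sub_le_intervalIntegral_of_hasDerivWithinAt_Ici hψv hcont hbound ht
    (((hv'c.norm.pow 2).mono Icc_subset_Ici_self).intervalIntegrable_of_Icc ht)
end

section
/- Let v be a strongly evanescent solution of the second-order gradient system (DS-2), and suppose the operator norms ‖∇²ψ(v(t))‖ of the second derivative of ψ along the orbit are bounded uniformly in t ≥ 0. Then lim_{t→∞} ‖v′(t)‖ = 0 and lim_{t→∞} V(v(t)) = 0. -/
open Filter MeasureTheory Set Topology Real
open scoped InnerProductSpace

/-! The energy `E = ‖v'‖² + V(v)` satisfies `E' = 3⟪∇V(v), v'⟫`, and since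
`⟪∇V(x), w⟫ = ∇²ψ(x)(w, ∇ψ(x))`, the bound `M` on `∇²ψ` along the orbit gives `|E'| ≤ 3M E`.
By Grönwall, `E(t) ≤ e^{3|M|} E(s)` for `s ∈ [t - 1, t]`, so `E(t)` is dominated by
`∫_{t-1}^t E`, which tends to zero because `E` is integrable on `(0, ∞)`. -/

section Barbalat

variable {E : Type*} [NormedAddCommGroup E] [NormedSpace ℝ E] {f f' : ℝ → E} {K a : ℝ}

theorem norm_le_norm_mul_exp_of_norm_deriv_le
    (hf : ∀ t ∈ Ici a, HasDerivWithinAt f (f' t) (Ici a) t)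
    (bound : ∀ t ∈ Ici a, ‖f' t‖ ≤ K * ‖f t‖) {s t : ℝ} (hs : a ≤ s) (hst : s ≤ t) :
    ‖f t‖ ≤ ‖f s‖ * exp (K * (t - s)) := by
  have hIci : Ici s ⊆ Ici a := Ici_subset_Ici.2 hs
  have key := norm_le_gronwallBound_of_norm_deriv_right_le (f := f) (f' := f') (ε := 0) (b := t)
    (fun x hx => (hf x (hIci hx.1)).continuousWithinAt.mono (Icc_subset_Ici_self.trans hIci))
    (fun x hx => (hf x (hIci hx.1)).mono (Ici_subset_Ici.2 (hs.trans hx.1)))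
    le_rfl (fun x hx => by simpa using bound x (hIci hx.1)) t ⟨hst, le_rfl⟩
  rwa [gronwallBound_ε0] at key

theorem tendsto_integral_sub_one_of_integrableOn {g : ℝ → ℝ} (hg : IntegrableOn g (Ioi a)) :
    Tendsto (fun t => ∫ s in (t - 1)..t, g s) atTop (𝓝 0) := by
  have hI : ∀ᶠ t in atTop,
      ∫ s in (t - 1)..t, g s = (∫ s in a..t, g s) - ∫ s in a..(t - 1), g s := by
    filter_upwards [eventually_ge_atTop (a + 1)] with t ht
    have hint : ∀ b, a ≤ b → IntervalIntegrable g volume a b := fun b hb =>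
      (intervalIntegrable_iff_integrableOn_Ioc_of_le hb).2 (hg.mono_set Ioc_subset_Ioi_self)
    rw [intervalIntegral.integral_interval_sub_left (hint t (by linarith)) (hint _ (by linarith))]
  have hlim := (intervalIntegral_tendsto_integral_Ioi a hg tendsto_id).sub
    (intervalIntegral_tendsto_integral_Ioi a hg
      (tendsto_atTop_add_const_right atTop (-1) tendsto_id))
  rw [sub_self] at hlim
  exact (hlim.congr' (hI.mono fun t ht => ht.symm)).congr fun t => by simp [sub_eq_add_neg]

theorem tendsto_zero_of_integrableOn_of_norm_deriv_le
    (hf : ∀ t ∈ Ici a, HasDerivWithinAt f (f' t) (Ici a) t)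
    (bound : ∀ t ∈ Ici a, ‖f' t‖ ≤ K * ‖f t‖) (hint : IntegrableOn f (Ioi a)) :
    Tendsto f atTop (𝓝 0) := by
  have hle : ∀ t, a + 1 ≤ t → ‖f t‖ ≤ exp |K| * ∫ s in (t - 1)..t, ‖f s‖ := by
    intro t ht
    have hpt : ∀ s ∈ Icc (t - 1) t, ‖f t‖ ≤ exp |K| * ‖f s‖ := by
      rintro s ⟨hs1, hs2⟩
      calc ‖f t‖ ≤ ‖f s‖ * exp (K * (t - s)) :=
            norm_le_norm_mul_exp_of_norm_deriv_le hf bound (by linarith) hs2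
        _ ≤ ‖f s‖ * exp |K| := by
            gcongr
            calc K * (t - s) ≤ |K| * (t - s) := by gcongr; exact le_abs_self K
              _ ≤ |K| * 1 := by gcongr; linarith
              _ = |K| := mul_one _
        _ = exp |K| * ‖f s‖ := mul_comm _ _
    have hIoi : Ioc (t - 1) t ⊆ Ioi a := fun s hs => by simp only [mem_Ioi]; linarith [hs.1]
    calc ‖f t‖ = ∫ _ in (t - 1)..t, ‖f t‖ := by simp
      _ ≤ ∫ s in (t - 1)..t, exp |K| * ‖f s‖ := by
          refine intervalIntegral.integral_mono_on (by linarith) intervalIntegrable_const ?_ hpt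
          exact (intervalIntegrable_iff_integrableOn_Ioc_of_le (by linarith)).2
            ((hint.mono_set hIoi).norm.const_mul _)
      _ = exp |K| * ∫ s in (t - 1)..t, ‖f s‖ := intervalIntegral.integral_const_mul _ _
  have hlim := (tendsto_integral_sub_one_of_integrableOn hint.norm).const_mul (exp |K|)
  rw [mul_zero] at hlim
  exact squeeze_zero_norm' (eventually_atTop.2 ⟨a + 1, hle⟩) hlim

end Barbalat

section HalfNormSqGradient

variable {H : Type*} [NormedAddCommGroup H] [InnerProductSpace ℝ H] [CompleteSpace H]
  {ψ : H → ℝ} {x : H}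

theorem hasFDerivAt_gradient (h : DifferentiableAt ℝ (fderiv ℝ ψ) x) :
    HasFDerivAt (gradient ψ)
      ((InnerProductSpace.toDual ℝ H).symm.toContinuousLinearEquiv.toContinuousLinearMap.comp
        (fderiv ℝ (fderiv ℝ ψ) x)) x := by
  have hcomp : gradient ψ = (InnerProductSpace.toDual ℝ H).symm ∘ fderiv ℝ ψ := by
    rw [← toDual_comp_gradient, ← Function.comp_assoc, LinearIsometryEquiv.symm_comp_self,
      Function.id_comp]
  rw [hcomp]
  exact (InnerProductSpace.toDual ℝ H).symm.toContinuousLinearEquiv.hasFDerivAt.comp x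
    h.hasFDerivAt

theorem hasFDerivAt_half_norm_sq_gradient (h : DifferentiableAt ℝ (fderiv ℝ ψ) x) :
    HasFDerivAt (fun y => (1/2 : ℝ) * ‖gradient ψ y‖ ^ 2)
      ((ContinuousLinearMap.apply ℝ ℝ (gradient ψ x)).comp (fderiv ℝ (fderiv ℝ ψ) x)) x := by
  refine (((hasFDerivAt_gradient h).norm_sq).const_mul (1/2 : ℝ)).congr_fderiv ?_
  ext w
  simp only [smul_apply, ContinuousLinearMap.comp_apply, coe_innerSL_apply,
    ContinuousLinearEquiv.coe_coe, LinearIsometryEquiv.coe_toContinuousLinearEquiv,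
    ContinuousLinearMap.apply_apply, nsmul_eq_mul, smul_eq_mul]
  rw [real_inner_comm, InnerProductSpace.toDual_symm_apply]
  ring

theorem abs_inner_gradient_half_norm_sq_gradient_le (h : DifferentiableAt ℝ (fderiv ℝ ψ) x)
    (w : H) :
    |⟪gradient (fun y => (1/2 : ℝ) * ‖gradient ψ y‖ ^ 2) x, w⟫_ℝ| ≤
      ‖fderiv ℝ (fderiv ℝ ψ) x‖ * (‖w‖ ^ 2 + (1/2 : ℝ) * ‖gradient ψ x‖ ^ 2) := by
  rw [inner_gradient_left, (hasFDerivAt_half_norm_sq_gradient h).fderiv]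
  set A := fderiv ℝ (fderiv ℝ ψ) x
  calc |A w (gradient ψ x)| ≤ ‖A w‖ * ‖gradient ψ x‖ := (A w).le_opNorm _
    _ ≤ ‖A‖ * ‖w‖ * ‖gradient ψ x‖ := by gcongr; exact A.le_opNorm w
    _ ≤ ‖A‖ * (‖w‖ ^ 2 + (1/2 : ℝ) * ‖gradient ψ x‖ ^ 2) := by
        rw [mul_assoc]
        gcongr
        nlinarith [sq_nonneg (‖w‖ - ‖gradient ψ x‖), sq_nonneg ‖w‖]

end HalfNormSqGradient

theorem hasDerivWithinAt_norm_sq_add_potential {H : Type*} [NormedAddCommGroup H]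
    [InnerProductSpace ℝ H] [CompleteSpace H] {W : H → ℝ} {v v' : ℝ → H} {s : Set ℝ} {t : ℝ}
    (hW : DifferentiableAt ℝ W (v t)) (hv : HasDerivWithinAt v (v' t) s t)
    (hv' : HasDerivWithinAt v' (gradient W (v t)) s t) :
    HasDerivWithinAt (fun τ => ‖v' τ‖ ^ 2 + W (v τ)) (3 * ⟪gradient W (v t), v' t⟫_ℝ) s t := by
  have hW_comp := hW.hasFDerivAt.comp_hasDerivWithinAt t hv
  rw [← inner_gradient_left] at hW_comp
  exact (hv'.norm_sq.add hW_comp).congr_deriv (by rw [real_inner_comm]; ring)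


/-- Proposition 1 (iii): if `v` is a strongly evanescent solution of the second-order
gradient system `v'' = ∇V(v)` with `V = ½‖∇ψ‖²` and the operator norms `‖∇²ψ(v t)‖`
are bounded uniformly in `t ≥ 0`, then `‖v'(t)‖ → 0` and `V(v t) → 0` as `t → ∞`. -/
theorem stmt_4 {H : Type*} [NormedAddCommGroup H] [InnerProductSpace ℝ H] [CompleteSpace H]
    (ψ : H → ℝ) (hψ : ContDiff ℝ 2 ψ)
    (V : H → ℝ) (hV : V = fun x => (1/2 : ℝ) * ‖gradient ψ x‖ ^ 2)
    (v v' : ℝ → H)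
    (hv : ∀ t ∈ Ici (0:ℝ), HasDerivWithinAt v (v' t) (Ici 0) t)
    (hv' : ∀ t ∈ Ici (0:ℝ), HasDerivWithinAt v' (gradient V (v t)) (Ici 0) t)
    (hev : IntegrableOn (fun t => ‖v' t‖ ^ 2 + V (v t)) (Ioi 0))
    (hbdd : ∃ M : ℝ, ∀ t ≥ (0:ℝ), ‖fderiv ℝ (fderiv ℝ ψ) (v t)‖ ≤ M) :
    Tendsto (fun t => ‖v' t‖) atTop (nhds 0) ∧
      Tendsto (fun t => V (v t)) atTop (nhds 0) := by
  subst hV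
  obtain ⟨M, hM⟩ := hbdd
  have hψ' : Differentiable ℝ (fderiv ℝ ψ) :=
    (hψ.fderiv_right (m := 1) (by norm_num)).differentiable one_ne_zero
  have henergy_nonneg : ∀ t, 0 ≤ ‖v' t‖ ^ 2 + (1/2 : ℝ) * ‖gradient ψ (v t)‖ ^ 2 :=
    fun t => by positivity
  have henergy :
      Tendsto (fun t => ‖v' t‖ ^ 2 + (1/2 : ℝ) * ‖gradient ψ (v t)‖ ^ 2) atTop (𝓝 0) := by
    refine tendsto_zero_of_integrableOn_of_norm_deriv_le (K := 3 * M)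
      (fun t ht => hasDerivWithinAt_norm_sq_add_potential
        (hasFDerivAt_half_norm_sq_gradient (hψ' _)).differentiableAt (hv t ht) (hv' t ht))
      (fun t ht => ?_) hev
    rw [Real.norm_eq_abs, Real.norm_eq_abs, abs_of_nonneg (henergy_nonneg t), abs_mul,
      abs_of_pos three_pos, mul_assoc]
    gcongr
    exact (abs_inner_gradient_half_norm_sq_gradient_le (hψ' _) _).trans (by gcongr; exact hM t ht)
  refine ⟨?_, squeeze_zero (fun t => by positivity)
    (fun t => le_add_of_nonneg_left (by positivity)) henergy⟩
  have hsqrt := henergy.sqrt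
  rw [Real.sqrt_zero] at hsqrt
  exact squeeze_zero (fun t => norm_nonneg _)
    (fun t => Real.le_sqrt_of_sq_le (le_add_of_nonneg_right (by positivity))) hsqrt
end

section
/- Assume ψ is convex and let u be a global solution of the first-order gradient system (DS-1). Then t ↦ ψ(u(t)) is convex and nonincreasing on [0, ∞), and inf_{t ≥ 0} ψ(u(t)) = lim_{t→∞} ψ(u(t)) = inf_{z ∈ H} ψ(z). -/
open Filter Set Topology

/-!
Along the flow, `(ψ ∘ u)' = -‖∇ψ(u)‖²` and `(‖∇ψ(u)‖²)' = -2 D²ψ(u)(∇ψ(u), ∇ψ(u)) ≤ 0`, because the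
second derivative of a convex function is positive semidefinite; so `ψ ∘ u` is nonincreasing with
nondecreasing derivative, hence convex. By the first-order convexity inequality
`ψ z ≥ ψ x + ⟪∇ψ x, z - x⟫`, the function `t ↦ ‖u t - z‖² + 2t (ψ (u T) - ψ z)` is nonincreasing
on `[0, T]`, whence `ψ (u T) ≤ ψ z + ‖u 0 - z‖² / 2T`. Letting `T → ∞` gives the infimum, and
monotonicity gives the limit.
-/

section

variable {E : Type*} [NormedAddCommGroup E] [NormedSpace ℝ E] {f : E → ℝ} {s : Set E} {x y : E}

theorem ConvexOn.fderiv_apply_sub_le (hf : ConvexOn ℝ s f) (hx : x ∈ s) (hy : y ∈ s)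
    (hd : DifferentiableAt ℝ f x) : fderiv ℝ f x (y - x) ≤ f y - f x := by
  set ℓ : ℝ →ᵃ[ℝ] E := AffineMap.lineMap x y
  have hline : HasDerivAt (f ∘ ℓ) (fderiv ℝ f x (y - x)) 0 :=
    hd.hasFDerivAt.comp_hasDerivAt_of_eq 0 AffineMap.hasDerivAt_lineMap (by simp [ℓ])
  have := (hf.comp_affineMap ℓ).le_slope_of_hasDerivAt
    (by simpa [ℓ] using hx) (by simpa [ℓ] using hy) one_pos hline
  simpa [slope_def_field, ℓ] using this

theorem ConvexOn.fderiv_fderiv_apply_self_nonneg (hf : ConvexOn ℝ univ f)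
    (hd : Differentiable ℝ f) (hd2 : DifferentiableAt ℝ (fderiv ℝ f) x) (v : E) :
    0 ≤ fderiv ℝ (fderiv ℝ f) x v v := by
  set ℓ : ℝ →ᵃ[ℝ] E := AffineMap.lineMap x (x + v)
  have hℓ : ∀ s : ℝ, HasDerivAt ℓ v s := fun s => by
    simpa using AffineMap.hasDerivAt_lineMap (a := x) (b := x + v) (x := s)
  have hk : ∀ s : ℝ, HasDerivAt (f ∘ ℓ) (fderiv ℝ f (ℓ s) v) s := fun s =>
    (hd _).hasFDerivAt.comp_hasDerivAt s (hℓ s)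
  have hmono : Monotone fun s => fderiv ℝ f (ℓ s) v := by
    have := (hf.comp_affineMap ℓ).monotoneOn_deriv fun s _ => (hk s).differentiableAt
    rw [preimage_univ, monotoneOn_univ] at this
    rwa [show deriv (f ∘ ℓ) = _ from funext fun s => (hk s).deriv] at this
  have hr : HasDerivAt (fun s => fderiv ℝ f (ℓ s) v) (fderiv ℝ (fderiv ℝ f) x v v) 0 :=
    (ContinuousLinearMap.apply ℝ ℝ v).hasFDerivAt.comp_hasDerivAt (0 : ℝ)
      (hd2.hasFDerivAt.comp_hasDerivAt_of_eq 0 (hℓ 0) (by simp [ℓ]))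
  simpa [hr.deriv] using hmono.deriv_nonneg (x := 0)

end

theorem Convex.antitoneOn_of_hasDerivWithinAt_nonpos {D : Set ℝ} (hD : Convex ℝ D)
    {f f' : ℝ → ℝ} (hf : ∀ x ∈ D, HasDerivWithinAt f (f' x) D x)
    (hf' : ∀ x ∈ interior D, f' x ≤ 0) : AntitoneOn f D :=
  _root_.antitoneOn_of_hasDerivWithinAt_nonpos hD (fun x hx => (hf x hx).continuousWithinAt)
    (fun x hx => (hf x (interior_subset hx)).mono interior_subset) hf'

theorem AntitoneOn.tendsto_atTop_biInf_Ici {β α : Type*} [SemilatticeSup β]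
    [CompleteLinearOrder α] [TopologicalSpace α] [OrderTopology α] {f : β → α} {a : β}
    (hf : AntitoneOn f (Ici a)) :
    Tendsto f atTop (𝓝 (⨅ t ∈ Ici a, f t)) := by
  refine tendsto_order.2 ⟨fun b hb => ?_, fun b hb => ?_⟩
  · filter_upwards [eventually_ge_atTop a] with t ht
    exact hb.trans_le (iInf₂_le t ht)
  · obtain ⟨t₀, hlt⟩ := iInf_lt_iff.1 hb
    obtain ⟨ht₀, hlt⟩ := iInf_lt_iff.1 hlt
    filter_upwards [eventually_ge_atTop t₀] with t ht
    exact (hf ht₀ (mem_Ici.2 ((mem_Ici.1 ht₀).trans ht)) ht).trans_lt hlt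

section GradientFlow

variable {H : Type*} [NormedAddCommGroup H] [InnerProductSpace ℝ H] [CompleteSpace H]

open InnerProductSpace in
theorem HasDerivWithinAt.gradient_comp {ψ : H → ℝ} {u : ℝ → H} {u' : H} {s : Set ℝ} {t : ℝ}
    (hψ : DifferentiableAt ℝ (fderiv ℝ ψ) (u t)) (hu : HasDerivWithinAt u u' s t) :
    HasDerivWithinAt (fun t => gradient ψ (u t))
      ((toDual ℝ H).symm (fderiv ℝ (fderiv ℝ ψ) (u t) u')) s t :=
  (toDual ℝ H).symm.toContinuousLinearEquiv.hasFDerivAt.comp_hasDerivWithinAt t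
    (hψ.hasFDerivAt.comp_hasDerivWithinAt t hu)

def IsGradientFlow (ψ : H → ℝ) (u : ℝ → H) : Prop :=
  ∀ t ∈ Ici (0 : ℝ), HasDerivWithinAt u (-gradient ψ (u t)) (Ici 0) t

namespace IsGradientFlow

variable {ψ : H → ℝ} {u : ℝ → H} {t : ℝ}

theorem hasDerivWithinAt_comp (hu : IsGradientFlow ψ u) (hψ : Differentiable ℝ ψ)
    (ht : t ∈ Ici 0) :
    HasDerivWithinAt (fun t => ψ (u t)) (-‖gradient ψ (u t)‖ ^ 2) (Ici 0) t := by
  have h := (hψ _).hasFDerivAt.comp_hasDerivWithinAt t (hu t ht)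
  rwa [← inner_gradient_left, inner_neg_right, real_inner_self_eq_norm_sq] at h

theorem hasDerivWithinAt_norm_gradient_sq (hu : IsGradientFlow ψ u)
    (hψ : Differentiable ℝ (fderiv ℝ ψ)) (ht : t ∈ Ici 0) :
    HasDerivWithinAt (fun t => ‖gradient ψ (u t)‖ ^ 2)
      (-(2 * fderiv ℝ (fderiv ℝ ψ) (u t) (gradient ψ (u t)) (gradient ψ (u t)))) (Ici 0) t := by
  convert ((hu t ht).gradient_comp (hψ _)).norm_sq using 1
  rw [real_inner_comm, InnerProductSpace.toDual_symm_apply]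
  simp

theorem antitoneOn_comp (hu : IsGradientFlow ψ u) (hψ : Differentiable ℝ ψ) :
    AntitoneOn (fun t => ψ (u t)) (Ici 0) :=
  (convex_Ici 0).antitoneOn_of_hasDerivWithinAt_nonpos
    (fun _ ht => hu.hasDerivWithinAt_comp hψ ht) fun _ _ => neg_nonpos.2 (sq_nonneg _)

theorem convexOn_comp (hu : IsGradientFlow ψ u) (hψ1 : Differentiable ℝ ψ)
    (hψ2 : Differentiable ℝ (fderiv ℝ ψ)) (hconv : ConvexOn ℝ univ ψ) :
    ConvexOn ℝ (Ici 0) (fun t => ψ (u t)) := by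
  refine convexOn_of_hasDerivWithinAt2_nonneg (convex_Ici 0)
    (fun t ht => (hu.hasDerivWithinAt_comp hψ1 ht).continuousWithinAt)
    (fun t ht => (hu.hasDerivWithinAt_comp hψ1 (interior_subset ht)).mono interior_subset)
    (fun t ht => ((hu.hasDerivWithinAt_norm_gradient_sq hψ2 (interior_subset ht)).neg).mono
      interior_subset) fun t _ => ?_
  simpa using hconv.fderiv_fderiv_apply_self_nonneg hψ1 (hψ2 _) (gradient ψ (u t))

theorem le_add_norm_sub_sq_div (hu : IsGradientFlow ψ u) (hψ : Differentiable ℝ ψ)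
    (hconv : ConvexOn ℝ univ ψ) (z : H) {T : ℝ} (hT : 0 < T) :
    ψ (u T) ≤ ψ z + ‖u 0 - z‖ ^ 2 / (2 * T) := by
  set c := ψ (u T) - ψ z
  have hG : ∀ t ∈ Icc 0 T, HasDerivWithinAt (fun t => ‖u t - z‖ ^ 2 + t * (2 * c))
      (2 * inner ℝ (u t - z) (-gradient ψ (u t)) + 2 * c) (Icc 0 T) t := fun t ht => by
    have h := (((hu t ht.1).sub_const z).norm_sq.fun_add
      ((hasDerivWithinAt_id t (Ici 0)).mul_const (2 * c))).mono
      (Icc_subset_Ici_self : Icc 0 T ⊆ Ici 0)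
    simpa only [id, one_mul] using h
  have hanti := (convex_Icc 0 T).antitoneOn_of_hasDerivWithinAt_nonpos hG fun t ht => by
    rw [interior_Icc] at ht
    have hfirst := hconv.fderiv_apply_sub_le (mem_univ (u t)) (mem_univ z) (hψ _)
    have hmono : ψ (u T) ≤ ψ (u t) :=
      hu.antitoneOn_comp hψ (mem_Ici.2 ht.1.le) (mem_Ici.2 hT.le) ht.2.le
    have hinner : inner ℝ (u t - z) (-gradient ψ (u t)) = fderiv ℝ ψ (u t) (z - u t) := by
      rw [inner_neg_right, ← inner_neg_left, neg_sub, real_inner_comm, inner_gradient_left]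
    linarith
  have hGT := hanti (left_mem_Icc.2 hT.le) (right_mem_Icc.2 hT.le) hT.le
  simp only [zero_mul, add_zero] at hGT
  rw [← sub_le_iff_le_add', le_div_iff₀ (by positivity)]
  nlinarith [sq_nonneg ‖u T - z‖]

theorem biInf_comp_eq_iInf (hu : IsGradientFlow ψ u) (hψ : Differentiable ℝ ψ)
    (hconv : ConvexOn ℝ univ ψ) :
    (⨅ t ∈ Ici (0 : ℝ), (ψ (u t) : EReal)) = ⨅ z, (ψ z : EReal) := by
  refine le_antisymm (le_iInf fun z => ?_) (le_iInf₂ fun t _ => iInf_le _ (u t))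
  have hlim : Tendsto (fun T : ℝ => ((ψ z + ‖u 0 - z‖ ^ 2 / (2 * T) : ℝ) : EReal)) atTop
      (𝓝 (ψ z)) := by
    refine EReal.tendsto_coe.2 ?_
    simpa using tendsto_const_nhds.add
      (tendsto_const_nhds.div_atTop (tendsto_id.const_mul_atTop (two_pos : (0 : ℝ) < 2)))
  refine ge_of_tendsto hlim ?_
  filter_upwards [eventually_gt_atTop 0] with T hT
  exact (iInf₂_le T hT.le).trans (EReal.coe_le_coe (hu.le_add_norm_sub_sq_div hψ hconv z hT))

end IsGradientFlow

end GradientFlow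

/-- Proposition 3 (i): if `ψ` is convex and `u` is a global solution of `u' = -∇ψ(u)`,
then `t ↦ ψ(u t)` is convex and nonincreasing on `[0, ∞)`, and
`inf_{t ≥ 0} ψ(u t) = lim_{t→∞} ψ(u t) = inf_{z ∈ H} ψ(z)` (equalities in `EReal`,
so that the common value may be `-∞`). -/
theorem stmt_7 {H : Type*} [NormedAddCommGroup H] [InnerProductSpace ℝ H] [CompleteSpace H]
    (ψ : H → ℝ) (hψ : ContDiff ℝ 2 ψ) (hconv : ConvexOn ℝ univ ψ)
    (u u' : ℝ → H)
    (hu : ∀ t ∈ Ici (0:ℝ), HasDerivWithinAt u (u' t) (Ici 0) t)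
    (hode : ∀ t ∈ Ici (0:ℝ), u' t = -(gradient ψ (u t))) :
    ConvexOn ℝ (Ici 0) (fun t => ψ (u t)) ∧
      AntitoneOn (fun t => ψ (u t)) (Ici 0) ∧
      (⨅ t ∈ Ici (0:ℝ), (ψ (u t) : EReal)) = ⨅ z : H, (ψ z : EReal) ∧
      Tendsto (fun t => (ψ (u t) : EReal)) atTop (nhds (⨅ z : H, (ψ z : EReal))) := by
  have hflow : IsGradientFlow ψ u := fun t ht => hode t ht ▸ hu t ht
  have hψ1 : Differentiable ℝ ψ := hψ.differentiable two_ne_zero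
  have hψ2 : Differentiable ℝ (fderiv ℝ ψ) :=
    (hψ.fderiv_right (m := 1) le_rfl).differentiable one_ne_zero
  have hanti := hflow.antitoneOn_comp hψ1
  have hinf := hflow.biInf_comp_eq_iInf hψ1 hconv
  refine ⟨hflow.convexOn_comp hψ1 hψ2 hconv, hanti, hinf, ?_⟩
  rw [← hinf]
  exact (EReal.coe_strictMono.monotone.comp_antitoneOn hanti).tendsto_atTop_biInf_Ici
end

section
/- Assume ψ is convex with Crit_ψ = ∅, and let u be a global solution of the first-order gradient system (DS-1). Then lim_{t→∞} ‖u(t)‖ = +∞. -/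
/-!
Along the flow, `ψ ∘ u` decreases, and for every `x` the estimate
`d/dt ‖u t - x‖² ≤ 2 (ψ x - ψ (u t))` shows that `ψ (u t)` cannot stay above `ψ x`.
If `‖u t‖ < R` for arbitrarily large `t`, the sets `{ψ ≤ ψ (u n)} ∩ closedBall 0 R` form a
decreasing sequence of nonempty bounded closed convex sets. In a Hilbert space such a sequence
has a common point (the minimal-norm points of the sets form a Cauchy sequence), and that
point minimises `ψ`, hence is critical.
-/

open Filter Set Topology InnerProductSpace

section Convexity

variable {E : Type*} [NormedAddCommGroup E] [NormedSpace ℝ E]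

theorem ConvexOn.add_fderiv_sub_le {f : E → ℝ} {f' : E →L[ℝ] ℝ} {s : Set E} {x y : E}
    (hf : ConvexOn ℝ s f) (hx : x ∈ s) (hy : y ∈ s) (hf' : HasFDerivAt f f' x) :
    f x + f' (y - x) ≤ f y := by
  have hline : HasDerivAt (fun r : ℝ => AffineMap.lineMap x y r) (y - x) 0 := by
    simpa [AffineMap.lineMap_apply_module'] using
      ((hasDerivAt_id (0 : ℝ)).smul_const (y - x)).add_const x
  have hf₀ : HasFDerivAt f f' (AffineMap.lineMap x y (0 : ℝ)) := by simpa using hf'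
  have hderiv := hf₀.comp_hasDerivAt (0 : ℝ) hline
  have hslope := (hf.comp_affineMap (AffineMap.lineMap x y)).le_slope_of_hasDerivAt
    (by simpa using hx) (by simpa using hy) zero_lt_one hderiv
  simp only [slope_def_field, Function.comp_apply, AffineMap.lineMap_apply_zero,
    AffineMap.lineMap_apply_one] at hslope
  linarith

end Convexity

section Hilbert

variable {E : Type*} [NormedAddCommGroup E] [InnerProductSpace ℝ E]

theorem ConvexOn.add_inner_gradient_sub_le [CompleteSpace E] {f : E → ℝ} {f' : E} {s : Set E}
    {x y : E} (hf : ConvexOn ℝ s f) (hx : x ∈ s) (hy : y ∈ s) (hf' : HasGradientAt f f' x) :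
    f x + ⟪f', y - x⟫_ℝ ≤ f y := by
  simpa using hf.add_fderiv_sub_le hx hy hf'.hasFDerivAt

theorem Convex.exists_isMinOn_norm [CompleteSpace E] {K : Set E} (hK : Convex ℝ K)
    (hcl : IsClosed K) (hne : K.Nonempty) : ∃ x ∈ K, IsMinOn norm K x := by
  obtain ⟨x, hx, hinf⟩ := exists_norm_eq_iInf_of_complete_convex hne hcl.isComplete hK 0
  refine ⟨x, hx, fun w hw => ?_⟩
  have hbdd : BddBelow (range fun w : K => ‖(0 : E) - w‖) :=
    ⟨0, by rintro _ ⟨w, rfl⟩; positivity⟩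
  have hw_ge := ciInf_le hbdd ⟨w, hw⟩
  simp only [zero_sub, norm_neg] at hinf hw_ge
  exact hinf ▸ hw_ge

/-- The parallelogram law for `x` and `y`, whose midpoint lies in `K`. -/
theorem Convex.norm_sub_sq_le_of_isMinOn_norm {K : Set E} {x y : E} (hK : Convex ℝ K)
    (hx : x ∈ K) (hmin : IsMinOn norm K x) (hy : y ∈ K) :
    ‖y - x‖ ^ 2 ≤ 2 * (‖y‖ ^ 2 - ‖x‖ ^ 2) := by
  have hmid : (1 / 2 : ℝ) • x + (1 / 2 : ℝ) • y ∈ K :=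
    hK hx hy (by norm_num) (by norm_num) (by norm_num)
  have hle : ‖x‖ ≤ ‖x + y‖ / 2 := by
    have := hmin hmid
    rwa [mem_ofPred_eq, ← smul_add, norm_smul, Real.norm_of_nonneg (by norm_num),
      one_div_mul_eq_div] at this
  have hpar := parallelogram_law_with_norm ℝ x y
  rw [← norm_neg (y - x), neg_sub]
  nlinarith [norm_nonneg x]

theorem Antitone.nonempty_iInter_of_isClosed_of_convex [CompleteSpace E] {C : ℕ → Set E}
    (hC : Antitone C) (hne : ∀ n, (C n).Nonempty) (hcl : ∀ n, IsClosed (C n))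
    (hconv : ∀ n, Convex ℝ (C n)) (hbdd : Bornology.IsBounded (C 0)) :
    (⋂ n, C n).Nonempty := by
  choose x hxC hxmin using fun n => (hconv n).exists_isMinOn_norm (hcl n) (hne n)
  obtain ⟨R, hR⟩ := hbdd.exists_norm_le
  set a : ℕ → ℝ := fun n => ‖x n‖ ^ 2
  have ha_mono : Monotone a := fun n m hnm =>
    pow_le_pow_left₀ (norm_nonneg _) (hxmin n (hC hnm (hxC m))) 2
  have ha_bdd : BddAbove (range a) := ⟨R ^ 2, by
    rintro _ ⟨n, rfl⟩
    exact pow_le_pow_left₀ (norm_nonneg _) (hR _ (hC (Nat.zero_le n) (hxC n))) 2⟩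
  set L := ⨆ k, a k
  have hdist : ∀ n m, n ≤ m → dist (x n) (x m) ≤ √(2 * (L - a n)) := by
    intro n m hnm
    rw [dist_comm, dist_eq_norm, ← Real.sqrt_sq (norm_nonneg _)]
    refine Real.sqrt_le_sqrt ?_
    have := (hconv n).norm_sub_sq_le_of_isMinOn_norm (hxC n) (hxmin n) (hC hnm (hxC m))
    have := le_ciSup ha_bdd m
    linarith
  have hlim : Tendsto (fun n => √(2 * (L - a n))) atTop (𝓝 0) := by
    have ha_lim : Tendsto a atTop (𝓝 L) := tendsto_atTop_ciSup ha_mono ha_bdd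
    have := (ha_lim.const_sub L).const_mul 2
    rw [sub_self, mul_zero] at this
    have := (Real.continuous_sqrt.tendsto 0).comp this
    rwa [Real.sqrt_zero] at this
  obtain ⟨z, hz⟩ := cauchySeq_tendsto_of_complete (cauchySeq_of_le_tendsto_0' _ hdist hlim)
  refine ⟨z, mem_iInter.2 fun n => (hcl n).mem_of_tendsto hz ?_⟩
  filter_upwards [eventually_ge_atTop n] with m hm using hC hm (hxC m)

end Hilbert

theorem antitoneOn_Ici_of_hasDerivWithinAt_nonpos {f f' : ℝ → ℝ} {a : ℝ}
    (hf : ∀ t ∈ Ici a, HasDerivWithinAt f (f' t) (Ici a) t) (hf' : ∀ t ∈ Ici a, f' t ≤ 0) :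
    AntitoneOn f (Ici a) := by
  refine antitoneOn_of_hasDerivWithinAt_nonpos (f' := f') (convex_Ici a)
    (fun t ht => (hf t ht).continuousWithinAt) ?_ ?_ <;> rw [interior_Ici]
  · exact fun t ht => (hf t (mem_Ici_of_Ioi ht)).mono Ioi_subset_Ici_self
  · exact fun t ht => hf' t (mem_Ici_of_Ioi ht)

section GradientFlow

variable {H : Type*} [NormedAddCommGroup H] [InnerProductSpace ℝ H] [CompleteSpace H]
  {ψ : H → ℝ} {u u' : ℝ → H}

theorem antitoneOn_comp_gradientFlow (hψ : Differentiable ℝ ψ)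
    (hu : ∀ t ∈ Ici (0 : ℝ), HasDerivWithinAt u (u' t) (Ici 0) t)
    (hode : ∀ t ∈ Ici (0 : ℝ), u' t = -(gradient ψ (u t))) :
    AntitoneOn (ψ ∘ u) (Ici 0) := by
  refine antitoneOn_Ici_of_hasDerivWithinAt_nonpos (f' := fun t => -‖gradient ψ (u t)‖ ^ 2)
    (fun t ht => ?_) (fun t _ => neg_nonpos.2 (sq_nonneg _))
  have := (hψ (u t)).hasGradientAt.hasFDerivAt.comp_hasDerivWithinAt t (hu t ht)
  rwa [toDual_apply_apply, hode t ht, inner_neg_right, real_inner_self_eq_norm_sq] at this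

/-- By convexity `d/dt ‖u t - x‖² ≤ 2 (ψ x - ψ (u t))`, so if `ψ x < m` then
`‖u t - x‖² + 2 (m - ψ x) t` is antitone, which is absurd for large `t`. -/
theorem le_of_forall_le_comp_gradientFlow (hψ : Differentiable ℝ ψ)
    (hconv : ConvexOn ℝ univ ψ)
    (hu : ∀ t ∈ Ici (0 : ℝ), HasDerivWithinAt u (u' t) (Ici 0) t)
    (hode : ∀ t ∈ Ici (0 : ℝ), u' t = -(gradient ψ (u t)))
    {m : ℝ} (hm : ∀ t ∈ Ici (0 : ℝ), m ≤ ψ (u t)) (x : H) : m ≤ ψ x := by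
  by_contra! hx
  set δ := m - ψ x
  set f : ℝ → ℝ := fun t => ‖u t - x‖ ^ 2 + 2 * δ * t
  have hf : ∀ t ∈ Ici (0 : ℝ),
      HasDerivWithinAt f (2 * ⟪u t - x, u' t⟫_ℝ + 2 * δ) (Ici 0) t := fun t ht =>
    ((hu t ht).sub_const x).norm_sq.add (by simpa using (hasDerivWithinAt_id t _).const_mul (2 * δ))
  have hf' : ∀ t ∈ Ici (0 : ℝ), 2 * ⟪u t - x, u' t⟫_ℝ + 2 * δ ≤ 0 := by
    intro t ht
    have hsub := hconv.add_inner_gradient_sub_le (mem_univ _) (mem_univ x)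
      (hψ (u t)).hasGradientAt
    have : ⟪u t - x, u' t⟫_ℝ = ⟪gradient ψ (u t), x - u t⟫_ℝ := by
      rw [hode t ht, inner_neg_right, real_inner_comm, ← inner_neg_right, neg_sub]
    linarith [hm t ht]
  set T := (f 0 + 1) / δ
  have hT : 0 ≤ T := div_nonneg (by positivity) (by linarith)
  have hfT : f T ≤ f 0 := antitoneOn_Ici_of_hasDerivWithinAt_nonpos hf hf' self_mem_Ici hT hT
  have : δ * T = f 0 + 1 := mul_div_cancel₀ _ (by linarith)
  nlinarith [sq_nonneg ‖u T - x‖]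

theorem exists_isMinOn_of_frequently_norm_lt (hψ : Differentiable ℝ ψ)
    (hconv : ConvexOn ℝ univ ψ)
    (hu : ∀ t ∈ Ici (0 : ℝ), HasDerivWithinAt u (u' t) (Ici 0) t)
    (hode : ∀ t ∈ Ici (0 : ℝ), u' t = -(gradient ψ (u t)))
    {R : ℝ} (hR : ∃ᶠ t in atTop, ‖u t‖ < R) : ∃ z, IsMinOn ψ univ z := by
  have hanti := antitoneOn_comp_gradientFlow hψ hu hode
  have hanti_nat : ∀ {n k : ℕ}, n ≤ k → ψ (u k) ≤ ψ (u n) := fun hnk =>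
    hanti (mem_Ici.2 (Nat.cast_nonneg _)) (mem_Ici.2 (Nat.cast_nonneg _)) (Nat.cast_le.2 hnk)
  obtain ⟨z, hz⟩ : (⋂ n : ℕ, {x | ψ x ≤ ψ (u n)} ∩ Metric.closedBall 0 R).Nonempty := by
    refine Antitone.nonempty_iInter_of_isClosed_of_convex
      (fun n k hnk x hx => ⟨hx.1.trans (hanti_nat hnk), hx.2⟩) (fun n => ?_)
      (fun n => (isClosed_le hψ.continuous continuous_const).inter Metric.isClosed_closedBall)
      (fun n => by simpa using (hconv.convex_le _).inter (convex_closedBall 0 R))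
      (Metric.isBounded_closedBall.subset inter_subset_right)
    obtain ⟨t, hnt, htR⟩ := ((eventually_ge_atTop (n : ℝ)).and_frequently hR).exists
    have hn : (0 : ℝ) ≤ n := Nat.cast_nonneg n
    exact ⟨u t, hanti (mem_Ici.2 hn) (mem_Ici.2 (hn.trans hnt)) hnt, by simpa using htR.le⟩
  have hz_le : ∀ t ∈ Ici (0 : ℝ), ψ z ≤ ψ (u t) := fun t ht =>
    ((mem_iInter.1 hz ⌈t⌉₊).1).trans
      (hanti ht (mem_Ici.2 ((mem_Ici.1 ht).trans (Nat.le_ceil t))) (Nat.le_ceil t))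
  exact ⟨z, fun x _ => le_of_forall_le_comp_gradientFlow hψ hconv hu hode hz_le x⟩

end GradientFlow

/-- Proposition 4 (ii): if `ψ` is convex with `Crit ψ = ∅` and `u` is a global solution of
`u' = -∇ψ(u)`, then `‖u(t)‖ → +∞` as `t → ∞`. -/
theorem stmt_12 {H : Type*} [NormedAddCommGroup H] [InnerProductSpace ℝ H] [CompleteSpace H]
    (ψ : H → ℝ) (hψ : ContDiff ℝ 2 ψ) (hconv : ConvexOn ℝ univ ψ)
    (hcrit : {x : H | gradient ψ x = 0} = ∅)
    (u u' : ℝ → H)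
    (hu : ∀ t ∈ Ici (0:ℝ), HasDerivWithinAt u (u' t) (Ici 0) t)
    (hode : ∀ t ∈ Ici (0:ℝ), u' t = -(gradient ψ (u t))) :
    Tendsto (fun t => ‖u t‖) atTop atTop := by
  by_contra hnot
  obtain ⟨R, hR⟩ : ∃ R, ∃ᶠ t in atTop, ‖u t‖ < R := by
    simpa [tendsto_atTop, frequently_atTop] using hnot
  obtain ⟨z, hz⟩ :=
    exists_isMinOn_of_frequently_norm_lt (hψ.differentiable (by norm_num)) hconv hu hode hR
  have hcrit_z : gradient ψ z = 0 := by
    rw [gradient, (hz.isLocalMin univ_mem).fderiv_eq_zero, map_zero]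
  exact (eq_empty_iff_forall_notMem.1 hcrit) z hcrit_z
end
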